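/- arXiv:2205.03506 — 6 statements merged into one kernel-verified Lean document; each statement's English description precedes it below -/
import Mathlib

section
/- Let d ≥ 2 be an integer and let X ⊆ 𝕋 be a nonempty compact set with m_d(X) = X. If g and h are monotone degree-1 circle maps such that g(t) = m_d(t) and h(t) = m_d(t) for every t ∈ X, then ρ(g) = ρ(h), i.e. the rotation number of a rotation set is well defined, independent of the choice of monotone degree-1 extension of m_d|_X. -/
open Set MeasureTheory ENNReal

noncomputable section

instance : Fact ((0:ℝ) < 1) := ⟨one_pos⟩

/-- The circle `ℝ/ℤ`. -/
abbrev Circle1 : Type := AddCircle (1 : ℝ)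

/-- The multiplication-by-`d` map `m_d` on the circle. -/
def md (d : ℕ) : Circle1 → Circle1 := fun t => d • t

/-- `G : ℝ → ℝ` (monotone, commuting with `x ↦ x + 1`) is a lift of the circle map `g`. -/
def IsLift (g : Circle1 → Circle1) (G : CircleDeg1Lift) : Prop :=
  ∀ x : ℝ, g ((x : ℝ) : Circle1) = ((G x : ℝ) : Circle1)

/-- `g` is a monotone degree-one circle map. -/
def IsMonotoneDeg1 (g : Circle1 → Circle1) : Prop :=
  ∃ G : CircleDeg1Lift, IsLift g G

/-- `ρ` is the rotation number of the monotone degree-one circle map `g`: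
the residue class mod `ℤ` of the translation number of a lift of `g`. -/
def HasRotationNumber (g : Circle1 → Circle1) (ρ : Circle1) : Prop :=
  ∃ G : CircleDeg1Lift, IsLift g G ∧ ρ = ((G.translationNumber : ℝ) : Circle1)

/-- `X` is a rotation set for `m_d`. -/
def IsRotationSet (d : ℕ) (X : Set Circle1) : Prop :=
  X.Nonempty ∧ IsCompact X ∧ md d '' X = X ∧
    ∃ g : Circle1 → Circle1, IsMonotoneDeg1 g ∧ ∀ t ∈ X, g t = md d t

/-- `X` is a rotation set for `m_d` with rotation number `ρ`. -/
def IsRotationSetWith (d : ℕ) (X : Set Circle1) (ρ : Circle1) : Prop :=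
  X.Nonempty ∧ IsCompact X ∧ md d '' X = X ∧
    ∃ g : Circle1 → Circle1, (∀ t ∈ X, g t = md d t) ∧ HasRotationNumber g ρ

/-- A gap of `X` is a connected component of the complement of `X`. -/
def IsGap (X : Set Circle1) (I : Set Circle1) : Prop :=
  ∃ t ∈ Xᶜ, I = connectedComponentIn Xᶜ t

/-- `C` is a periodic orbit (cycle) of `m_d`. -/
def IsPeriodicOrbit (d : ℕ) (C : Set Circle1) : Prop :=
  ∃ (t : Circle1) (n : ℕ), 0 < n ∧ (md d)^[n] t = t ∧
    C = Set.range (fun k : Fin n => (md d)^[(k : ℕ)] t)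

/-- The number of points of `X` whose representative in `[0,1)` lies in `[0,1/2)`. -/
def s1 (X : Set Circle1) : ℕ :=
  {t ∈ X | ((AddCircle.equivIco 1 0 t : ℝ) < 1 / 2)}.ncard


lemma rnwd_coe_eq_iff (a b : ℝ) : ((a : Circle1) = (b : Circle1)) ↔ ∃ k : ℤ, a - b = k := by
  rw [← sub_eq_zero, ← QuotientAddGroup.mk_sub, AddCircle.coe_eq_zero_iff]
  constructor
  · rintro ⟨n, hn⟩; exact ⟨n, by simpa [zsmul_eq_mul] using hn.symm⟩
  · rintro ⟨k, hk⟩; exact ⟨k, by simp [zsmul_eq_mul, hk]⟩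

lemma rnwd_md_coe (d : ℕ) (x : ℝ) : md d ((x:ℝ) : Circle1) = (((d * x : ℝ)) : Circle1) := by
  show d • ((x:ℝ) : Circle1) = _
  rw [← QuotientAddGroup.mk_nsmul, nsmul_eq_mul]

/-- The rotation number of a rotation set is well defined: any two
monotone degree-one circle maps extending `m_d` on an invariant nonempty compact set
`X` have the same rotation number. -/
theorem rotation_number_well_defined
    (d : ℕ) (hd : 2 ≤ d) (X : Set Circle1)
    (hX : X.Nonempty) (hXc : IsCompact X) (hXinv : md d '' X = X)
    (g h : Circle1 → Circle1) (G H : CircleDeg1Lift)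
    (hG : IsLift g G) (hH : IsLift h H)
    (hg : ∀ t ∈ X, g t = md d t) (hh : ∀ t ∈ X, h t = md d t) :
    ((G.translationNumber : ℝ) : Circle1) = ((H.translationNumber : ℝ) : Circle1) := by
  classical
  set Y : Set ℝ := {x : ℝ | ((x:ℝ) : Circle1) ∈ X} with hYdef
  have hper : ∀ x ∈ Y, ∀ n : ℤ, x + (n:ℝ) ∈ Y := by
    intro x hx n
    have he : (((x + n : ℝ)) : Circle1) = ((x:ℝ) : Circle1) :=
      (rnwd_coe_eq_iff _ _).2 ⟨n, by ring⟩
    show (((x + n : ℝ)) : Circle1) ∈ X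
    rw [he]; exact hx
  have hGmod : ∀ x ∈ Y, ∃ k : ℤ, G x - d * x = k := by
    intro x hx
    have h1 : ((G x : ℝ) : Circle1) = (((d*x:ℝ)) : Circle1) := by
      rw [← hG x, hg _ hx, rnwd_md_coe]
    exact (rnwd_coe_eq_iff _ _).1 h1
  have hHmod : ∀ x ∈ Y, ∃ k : ℤ, H x - d * x = k := by
    intro x hx
    have h1 : ((H x : ℝ) : Circle1) = (((d*x:ℝ)) : Circle1) := by
      rw [← hH x, hh _ hx, rnwd_md_coe]
    exact (rnwd_coe_eq_iff _ _).1 h1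
  have hdiff : ∀ x ∈ Y, ∃ k : ℤ, G x - H x = k := by
    intro x hx
    obtain ⟨k1, h1⟩ := hGmod x hx; obtain ⟨k2, h2⟩ := hHmod x hx
    exact ⟨k1 - k2, by push_cast; linarith⟩
  have hHY : ∀ x ∈ Y, H x ∈ Y := by
    intro x hx
    have h1 : ((H x : ℝ) : Circle1) = md d ((x:ℝ):Circle1) := by rw [← hH x, hh _ hx]
    have h2 : md d ((x:ℝ):Circle1) ∈ X := hXinv ▸ Set.mem_image_of_mem _ hx
    show ((H x : ℝ) : Circle1) ∈ X
    rw [h1]; exact h2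
  -- pair lemma with order
  have pair : ∀ x ∈ Y, ∀ y ∈ Y, x ≤ y → y < x + 1 →
      (¬ ∃ m : ℤ, d * y - d * x = (m:ℝ)) → G y - H y = G x - H x := by
    intro x hx y hy hxy hyx hni
    obtain ⟨k1, hk1⟩ := hGmod x hx
    obtain ⟨k2, hk2⟩ := hGmod y hy
    obtain ⟨k3, hk3⟩ := hHmod x hx
    obtain ⟨k4, hk4⟩ := hHmod y hy
    have ha0 : (0:ℝ) ≤ G y - G x := sub_nonneg.2 (G.mono hxy)
    have ha1 : G y - G x ≤ 1 := by
      have h1 : G y ≤ G (x + 1) := G.mono hyx.le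
      rw [G.map_add_one] at h1; linarith
    have hb0 : (0:ℝ) ≤ H y - H x := sub_nonneg.2 (H.mono hxy)
    have hb1 : H y - H x ≤ 1 := by
      have h1 : H y ≤ H (x + 1) := H.mono hyx.le
      rw [H.map_add_one] at h1; linarith
    set j : ℤ := k2 - k1 - (k4 - k3) with hjdef
    have hj : G y - G x - (H y - H x) = (j:ℝ) := by push_cast [hjdef]; linarith
    have hj1 : j ≤ 1 := by
      have : (j:ℝ) ≤ 1 := by linarith
      exact_mod_cast this
    have hjm1 : -1 ≤ j := by
      have : (-1:ℝ) ≤ (j:ℝ) := by linarith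
      exact_mod_cast this
    have hcase : j = -1 ∨ j = 0 ∨ j = 1 := by omega
    rcases hcase with hc | hc | hc <;> rw [hc] at hj <;> push_cast at hj
    · exfalso
      exact hni ⟨k1 - k2, by push_cast; linarith⟩
    · linarith
    · exfalso
      exact hni ⟨1 + k1 - k2, by push_cast; linarith⟩
  -- pair lemma without order
  have pair' : ∀ x ∈ Y, ∀ y ∈ Y, (¬ ∃ m : ℤ, d * y - d * x = (m:ℝ)) →
      G y - H y = G x - H x := by
    intro x hx y hy hni
    set n : ℤ := ⌈x - y⌉ with hndef
    have h1 : x ≤ y + (n:ℝ) := by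
      have := Int.le_ceil (x - y); rw [← hndef] at this; linarith
    have h2 : y + (n:ℝ) < x + 1 := by
      have := Int.ceil_lt_add_one (x - y); rw [← hndef] at this; linarith
    have hy' : y + (n:ℝ) ∈ Y := hper y hy n
    have hni' : ¬ ∃ m : ℤ, d * (y + (n:ℝ)) - d * x = (m:ℝ) := by
      rintro ⟨m, hm⟩
      exact hni ⟨m - d * n, by push_cast; linarith⟩
    have h3 := pair x hx (y + (n:ℝ)) hy' h1 h2 hni'
    rw [G.map_add_int, H.map_add_int] at h3
    linarith
  -- constancy
  have const : ∀ x ∈ Y, ∀ y ∈ Y, G y - H y = G x - H x := by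
    intro x hx y hy
    by_cases hz : ∃ z ∈ Y, ¬ ∃ m : ℤ, d * z - d * x = (m:ℝ)
    · obtain ⟨z, hzY, hzni⟩ := hz
      by_cases hyi : ∃ m : ℤ, d * y - d * x = (m:ℝ)
      · obtain ⟨m, hm⟩ := hyi
        have hzny : ¬ ∃ m' : ℤ, d * z - d * y = (m':ℝ) := by
          rintro ⟨m', hm'⟩
          exact hzni ⟨m' + m, by push_cast; linarith⟩
        have e1 := pair' y hy z hzY hzny
        have e2 := pair' x hx z hzY hzni
        linarith
      · exact pair' x hx y hy hyi
    · push_neg at hz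
      have hsing : ∀ t ∈ X, t = md d (((x:ℝ)) : Circle1) := by
        intro t ht
        rw [← hXinv] at ht
        obtain ⟨s, hs, rfl⟩ := ht
        obtain ⟨z, rfl⟩ := QuotientAddGroup.mk_surjective s
        have hzY : z ∈ Y := hs
        obtain ⟨m, hm⟩ := hz z hzY
        rw [rnwd_md_coe, rnwd_md_coe]
        exact (rnwd_coe_eq_iff _ _).2 ⟨m, hm⟩
      have hxy : ((y:ℝ):Circle1) = ((x:ℝ):Circle1) :=
        (hsing _ hy).trans (hsing _ hx).symm
      obtain ⟨n, hn⟩ := (rnwd_coe_eq_iff y x).1 hxy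
      have hyx : y = x + (n:ℝ) := by linarith
      rw [hyx, G.map_add_int, H.map_add_int]
      ring
  -- main argument
  obtain ⟨t₀, ht₀⟩ := hX
  obtain ⟨x₀, rfl⟩ := QuotientAddGroup.mk_surjective t₀
  have hx₀ : x₀ ∈ Y := ht₀
  obtain ⟨k, hk⟩ := hdiff x₀ hx₀
  have horb : ∀ n : ℕ, (H^[n]) x₀ ∈ Y ∧ (G^[n]) x₀ = (H^[n]) x₀ + (((n:ℤ) * k : ℤ) : ℝ) := by
    intro n
    induction n with
    | zero => simpa using hx₀
    | succ n ih =>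
      obtain ⟨ihY, ihE⟩ := ih
      refine ⟨?_, ?_⟩
      · rw [Function.iterate_succ_apply']
        exact hHY _ ihY
      · rw [Function.iterate_succ_apply', Function.iterate_succ_apply', ihE,
          G.map_add_int]
        have e2 : G ((H^[n]) x₀) - H ((H^[n]) x₀) = (k:ℝ) := by
          rw [const x₀ hx₀ _ ihY, hk]
        push_cast
        linarith
  have tG := G.tendsto_translationNumber x₀
  have tH := (H.tendsto_translationNumber x₀).add_const (k:ℝ)
  have key : G.translationNumber = H.translationNumber + (k:ℝ) := by
    refine tendsto_nhds_unique tG (tH.congr' ?_)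
    filter_upwards [Filter.eventually_gt_atTop 0] with n hn
    have hE := (horb n).2
    have hn' : (n:ℝ) ≠ 0 := Nat.cast_ne_zero.2 hn.ne'
    rw [CircleDeg1Lift.coe_pow, CircleDeg1Lift.coe_pow, hE]
    push_cast
    field_simp
    ring
  rw [key]
  exact (rnwd_coe_eq_iff _ _).2 ⟨k, by ring⟩
end
end

section
/- Let d ≥ 2 and let X ⊆ 𝕋 be a rotation set for m_d. If I is a gap of X whose length ℓ satisfies ℓ < 1/d (a minor gap), then m_d restricted to I is injective, the image m_d(I) is again a gap of X, and m_d(I) has length d·ℓ. -/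
open Set MeasureTheory ENNReal

noncomputable section

/-!
Lifting to `ℝ`, a gap of `X` is an arc `(a, b)` with endpoints in `X`, and `m_d` maps it onto
the arc `(d a, d b)`, injectively and scaling length by `d` as long as `d (b - a) < 1`. The point
is that no point `u` of `(d a, d b)` lies in `X`. Let `G` be a lift of the monotone extension of
`m_d|_X`. Then `G a - d a` and `G b - d b` are integers; as `b - a < 1/d`, they are the same
integer `p`. If `u` were in `X = m_d(X)`, it would have a preimage `y ∈ X ∩ (a, a + 1]`. That
preimage cannot lie in the gap, so `b ≤ y`, and monotonicity gives
`d b + p ≤ G y ≤ d a + 1 + p`. But `G y ≡ d y ≡ u (mod 1)` and `d a < u < d b`, so `G y - u`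
would be an integer strictly between `p` and `p + 1`.
-/

lemma IsClosed.exists_Ioo_subset_compl {α : Type*} [ConditionallyCompleteLinearOrder α]
    [TopologicalSpace α] [OrderTopology α] {F : Set α} (hF : IsClosed F) {t : α} (ht : t ∉ F)
    (hl : (F ∩ Iic t).Nonempty) (hr : (F ∩ Ici t).Nonempty) :
    ∃ a ∈ F, ∃ b ∈ F, t ∈ Ioo a b ∧ Ioo a b ⊆ Fᶜ := by
  have hl_bdd : BddAbove (F ∩ Iic t) := bddAbove_Iic.mono inter_subset_right
  have hr_bdd : BddBelow (F ∩ Ici t) := bddBelow_Ici.mono inter_subset_right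
  obtain ⟨haF, hat⟩ := (hF.inter isClosed_Iic).csSup_mem hl hl_bdd
  obtain ⟨hbF, htb⟩ := (hF.inter isClosed_Ici).csInf_mem hr hr_bdd
  refine ⟨_, haF, _, hbF, ⟨hat.lt_of_ne (ne_of_mem_of_not_mem haF ht),
    htb.lt_of_ne (ne_of_mem_of_not_mem hbF ht).symm⟩, ?_⟩
  rintro x ⟨hax, hxb⟩ hxF
  rcases le_total x t with hxt | htx
  · exact hax.not_ge (le_csSup hl_bdd ⟨hxF, hxt⟩)
  · exact hxb.not_ge (csInf_le hr_bdd ⟨hxF, htx⟩)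

lemma AddCircle.volume_coe_image_of_subset_Ioc {T : ℝ} [Fact (0 < T)] {s : Set ℝ} {t : ℝ}
    (hs : IsOpen s) (hst : s ⊆ Ioc t (t + T)) :
    volume (((↑) : ℝ → AddCircle T) '' s) = volume s := by
  rw [AddCircle.add_projection_respects_measure T t
    (QuotientAddGroup.isOpenMap_coe s hs).measurableSet]
  congr 1
  ext x
  constructor
  · rintro ⟨⟨y, hy, hyx⟩, hx⟩
    rwa [(AddCircle.coe_eq_coe_iff_of_mem_Ioc hx (hst hy)).mp hyx.symm]
  · exact fun hx => ⟨⟨x, hx, rfl⟩, hst hx⟩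

lemma coe_eq_coe_iff_exists_int {x y : ℝ} : (x : Circle1) = y ↔ ∃ n : ℤ, x = y + n := by
  rw [← sub_eq_zero, ← AddCircle.coe_sub, AddCircle.coe_eq_zero_iff]
  simp only [zsmul_eq_mul, mul_one]
  constructor <;> rintro ⟨n, hn⟩ <;> exact ⟨n, by linarith⟩

lemma md_coe (d : ℕ) (x : ℝ) : md d x = ((d * x : ℝ) : Circle1) := by
  rw [md, ← AddCircle.coe_nsmul, nsmul_eq_mul]

def arc (a b : ℝ) : Set Circle1 := ((↑) : ℝ → Circle1) '' Ioo a b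

lemma isOpen_arc (a b : ℝ) : IsOpen (arc a b) :=
  QuotientAddGroup.isOpenMap_coe _ isOpen_Ioo

lemma isPreconnected_arc (a b : ℝ) : IsPreconnected (arc a b) :=
  isPreconnected_Ioo.image _ (AddCircle.continuous_mk' 1).continuousOn

lemma volume_arc {a b : ℝ} (hab : b ≤ a + 1) : volume (arc a b) = ENNReal.ofReal (b - a) := by
  rw [arc, AddCircle.volume_coe_image_of_subset_Ioc isOpen_Ioo
    (Ioo_subset_Ioc_self.trans (Ioc_subset_Ioc_right hab)), Real.volume_Ioo]

lemma image_md_arc {d : ℕ} (hd : 0 < d) (a b : ℝ) :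
    md d '' arc a b = arc (d * a) (d * b) := by
  have hcomm :
      md d ∘ ((↑) : ℝ → Circle1) = ((↑) : ℝ → Circle1) ∘ ((d : ℝ) * ·) :=
    funext (md_coe d)
  rw [arc, arc, ← image_comp, hcomm, image_comp, image_mul_left_Ioo (by exact_mod_cast hd)]

lemma injOn_md_arc {d : ℕ} (hd : 0 < d) {a b : ℝ} (hlen : d * (b - a) ≤ 1) :
    InjOn (md d) (arc a b) := by
  have hd' : (0 : ℝ) < d := by exact_mod_cast hd
  have hmem : ∀ x ∈ Ioo a b, d * x ∈ Ioc (d * a) (d * a + 1) := fun x hx =>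
    ⟨mul_lt_mul_of_pos_left hx.1 hd', by nlinarith [hx.2]⟩
  rintro _ ⟨x, hx, rfl⟩ _ ⟨y, hy, rfl⟩ hxy
  rw [md_coe, md_coe, AddCircle.coe_eq_coe_iff_of_mem_Ioc (hmem x hx) (hmem y hy)] at hxy
  rw [mul_left_cancel₀ hd'.ne' hxy]

structure IsGapArc (X : Set Circle1) (a b : ℝ) : Prop where
  lt : a < b
  left_mem : (a : Circle1) ∈ X
  right_mem : (b : Circle1) ∈ X
  arc_subset : arc a b ⊆ Xᶜ

namespace IsGapArc

variable {X : Set Circle1} {a b : ℝ}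

lemma le_add_one (h : IsGapArc X a b) : b ≤ a + 1 := by
  by_contra! hb
  refine h.arc_subset ⟨a + 1, ⟨by linarith, hb⟩, rfl⟩ ?_
  rw [AddCircle.coe_add_period]
  exact h.left_mem

lemma connectedComponentIn_eq (h : IsGapArc X a b) {t : Circle1} (ht : t ∈ arc a b) :
    connectedComponentIn Xᶜ t = arc a b := by
  refine Subset.antisymm ?_ (isPreconnected_arc a b |>.subset_connectedComponentIn ht h.arc_subset)
  -- `Xᶜ` misses both endpoints, so it is split by the open arc and the complement of its closure.
  set K := ((↑) : ℝ → Circle1) '' Icc a b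
  have hK : IsClosed K := (isCompact_Icc.image (AddCircle.continuous_mk' 1)).isClosed
  have hsplit : Xᶜ ⊆ arc a b ∪ Kᶜ := by
    intro u hu
    by_cases huK : u ∈ K
    · obtain ⟨x, hx, rfl⟩ := huK
      refine Or.inl ⟨x, ⟨hx.1.lt_of_ne ?_, hx.2.lt_of_ne ?_⟩, rfl⟩ <;> rintro rfl
      exacts [hu h.left_mem, hu h.right_mem]
    · exact Or.inr huK
  exact isPreconnected_connectedComponentIn.subset_left_of_subset_union (isOpen_arc a b)
    hK.isOpen_compl (disjoint_compl_right.mono_left (image_mono Ioo_subset_Icc_self))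
    ((connectedComponentIn_subset _ _).trans hsplit)
    ⟨t, mem_connectedComponentIn (h.arc_subset ht), ht⟩

lemma isGap (h : IsGapArc X a b) : IsGap X (arc a b) := by
  have hmid : (((a + b) / 2 : ℝ) : Circle1) ∈ arc a b :=
    ⟨_, ⟨by linarith [h.lt], by linarith [h.lt]⟩, rfl⟩
  exact ⟨_, h.arc_subset hmid, (h.connectedComponentIn_eq hmid).symm⟩

end IsGapArc

lemma IsGap.exists_isGapArc {X I : Set Circle1} (hX : IsClosed X) (hXne : X.Nonempty)
    (hI : IsGap X I) : ∃ a b : ℝ, IsGapArc X a b ∧ I = arc a b := by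
  obtain ⟨_, ht, rfl⟩ := hI
  obtain ⟨t, rfl⟩ := QuotientAddGroup.mk_surjective ‹Circle1›
  obtain ⟨x₀, hx₀⟩ := hXne
  have hmeets : ∀ c : ℝ, ∃ x ∈ Icc c (c + 1), (x : Circle1) ∈ X := fun c => by
    obtain ⟨x, hx, hxx₀⟩ :=
      (AddCircle.coe_image_Icc_eq (p := (1 : ℝ)) c).symm ▸ mem_univ x₀
    exact ⟨x, hx, hxx₀ ▸ hx₀⟩
  obtain ⟨x, hx, hxX⟩ := hmeets (t - 1)
  obtain ⟨y, hy, hyX⟩ := hmeets t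
  obtain ⟨a, ha, b, hb, htab, hab⟩ :=
    (hX.preimage (AddCircle.continuous_mk' 1)).exists_Ioo_subset_compl ht
      ⟨x, hxX, mem_Iic.2 (by linarith [hx.2])⟩ ⟨y, hyX, hy.1⟩
  have hgap : IsGapArc X a b :=
    ⟨htab.1.trans htab.2, ha, hb, by rintro _ ⟨x, hx, rfl⟩; exact hab hx⟩
  exact ⟨a, b, hgap, hgap.connectedComponentIn_eq ⟨t, htab, rfl⟩⟩

lemma CircleDeg1Lift.int_eq_of_map_eq_mul_add (G : CircleDeg1Lift) {c a b : ℝ} {p q : ℤ}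
    (hc : 0 < c) (hab : a < b) (hb : b ≤ a + 1) (hlen : c * (b - a) < 1)
    (hGa : G a = c * a + p) (hGb : G b = c * b + q) : p = q := by
  have h₁ : G a ≤ G b := G.monotone hab.le
  have h₂ : G b ≤ G a + 1 := G.map_add_one a ▸ G.monotone hb
  have hpos : 0 < c * (b - a) := mul_pos hc (sub_pos.2 hab)
  have : (p : ℝ) - q < 1 ∧ (q : ℝ) - p < 1 := by constructor <;> linarith
  have : p - q < 1 ∧ q - p < 1 := by exact_mod_cast this
  omega

theorem IsGapArc.mul_of_lift {d : ℕ} (hd : 0 < d) {X : Set Circle1} (hX : md d '' X = X)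
    (G : CircleDeg1Lift) (hG : ∀ x : ℝ, (x : Circle1) ∈ X → (G x : Circle1) = md d x)
    {a b : ℝ} (h : IsGapArc X a b) (hlen : d * (b - a) < 1) :
    IsGapArc X (d * a) (d * b) := by
  have hd' : (0 : ℝ) < d := by exact_mod_cast hd
  have hlift : ∀ x : ℝ, (x : Circle1) ∈ X → ∃ n : ℤ, G x = d * x + n := fun x hx =>
    coe_eq_coe_iff_exists_int.mp ((hG x hx).trans (md_coe d x))
  have hmaps : ∀ x : ℝ, (x : Circle1) ∈ X → ((d * x : ℝ) : Circle1) ∈ X := fun x hx =>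
    hX ▸ ⟨x, hx, md_coe d x⟩
  obtain ⟨p, hp⟩ := hlift a h.left_mem
  obtain ⟨q, hq⟩ := hlift b h.right_mem
  obtain rfl : p = q := G.int_eq_of_map_eq_mul_add hd' h.lt h.le_add_one hlen hp hq
  refine ⟨mul_lt_mul_of_pos_left h.lt hd', hmaps a h.left_mem, hmaps b h.right_mem, ?_⟩
  rintro _ ⟨u, hu, rfl⟩ huX
  obtain ⟨y, hy, hyX, hyu⟩ : ∃ y ∈ Ioc a (a + 1), (y : Circle1) ∈ X ∧ md d y = u := by
    rw [← hX] at huX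
    obtain ⟨s, hs, hsu⟩ := huX
    obtain ⟨y, hy, rfl⟩ := (AddCircle.coe_image_Ioc_eq (p := (1 : ℝ)) a).symm ▸ mem_univ s
    exact ⟨y, hy, hs, hsu⟩
  have hby : b ≤ y := not_lt.1 fun hyb => h.arc_subset ⟨y, ⟨hy.1, hyb⟩, rfl⟩ hyX
  obtain ⟨k, hk⟩ := coe_eq_coe_iff_exists_int.mp ((hG y hyX).trans hyu)
  have h₁ : G b ≤ G y := G.monotone hby
  have h₂ : G y ≤ G a + 1 := G.map_add_one a ▸ G.monotone hy.2
  have : (p : ℝ) < k ∧ (k : ℝ) < p + 1 := by constructor <;> linarith [hu.1, hu.2]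
  have : p < k ∧ k < p + 1 := by exact_mod_cast this
  omega

/-- A minor gap of a rotation set maps injectively onto a gap of
`d` times its length. -/
theorem minor_gap_maps_to_gap
    (d : ℕ) (hd : 2 ≤ d) (X : Set Circle1) (hX : IsRotationSet d X)
    (I : Set Circle1) (hI : IsGap X I) (hlen : volume I < 1 / (d : ℝ≥0∞)) :
    Set.InjOn (md d) I ∧ IsGap X (md d '' I) ∧
      volume (md d '' I) = (d : ℝ≥0∞) * volume I := by
  obtain ⟨hXne, hXcpt, hXinv, g, ⟨G, hG⟩, hgX⟩ := hX
  obtain ⟨a, b, hgap, rfl⟩ := hI.exists_isGapArc hXcpt.isClosed hXne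
  have hd0 : 0 < d := by omega
  have hd' : (0 : ℝ) < d := by exact_mod_cast hd0
  have hlen' : (d : ℝ) * (b - a) < 1 := by
    rw [volume_arc hgap.le_add_one, ← ENNReal.ofReal_natCast, ← ENNReal.ofReal_one,
      ← ENNReal.ofReal_div_of_pos hd', ENNReal.ofReal_lt_ofReal_iff (by positivity),
      lt_div_iff₀ hd'] at hlen
    linarith
  have hGX : ∀ x : ℝ, (x : Circle1) ∈ X → (G x : Circle1) = md d x :=
    fun x hx => (hG x).symm.trans (hgX _ hx)
  rw [image_md_arc hd0]
  refine ⟨injOn_md_arc hd0 hlen'.le, (hgap.mul_of_lift hd0 hXinv G hGX hlen').isGap, ?_⟩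
  rw [volume_arc (by linarith), volume_arc hgap.le_add_one, ← mul_sub,
    ENNReal.ofReal_mul hd'.le, ENNReal.ofReal_natCast]
end
end

section
/- Let C and C′ be two distinct periodic orbits of m_3 which are both contained in a single rotation set X for m_3. Then C and C′ are superlinked: every connected component of 𝕋∖C contains a point of C′, and every connected component of 𝕋∖C′ contains a point of C. -/
open Set MeasureTheory ENNReal

noncomputable section

namespace SuperAux

lemma coe_eq_coe_iff' {x y : ℝ} : ((x : ℝ) : Circle1) = (y : Circle1) ↔ ∃ n : ℤ, y = x + n := by
  rw [QuotientAddGroup.eq_iff_sub_mem, AddSubgroup.mem_zmultiples_iff]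
  simp only [zsmul_eq_mul, mul_one]
  constructor
  · rintro ⟨k, hk⟩; exact ⟨-k, by push_cast; linarith⟩
  · rintro ⟨n, hn⟩; exact ⟨-n, by push_cast; linarith⟩

lemma coe_shift (x : ℝ) (n : ℤ) : ((x + n : ℝ) : Circle1) = (x : Circle1) :=
  (coe_eq_coe_iff'.mpr ⟨n, rfl⟩).symm

lemma coe_inj_of_abs_lt {x y : ℝ} (h : |x - y| < 1) (hxy : ((x:ℝ) : Circle1) = (y : Circle1)) :
    x = y := by
  obtain ⟨n, hn⟩ := coe_eq_coe_iff'.mp hxy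
  have h1 : |(n : ℝ)| < 1 := by rw [abs_sub_comm] at h; rw [hn] at h; simpa using h
  have h2 : n = 0 := by
    have h3 : -1 < n ∧ n < 1 := abs_lt.mp (by exact_mod_cast h1)
    omega
  rw [hn, h2]; simp

/-- A set of reals `{r | ↑r ∈ C} ∩ I` with `I` of length ≤ 1 is finite when `C` is. -/
lemma finite_reps {C : Set Circle1} (hC : C.Finite) {a b : ℝ} (hab : b ≤ a + 1) :
    {r : ℝ | ((r:ℝ) : Circle1) ∈ C ∧ r ∈ Ico a b}.Finite := by
  apply Set.Finite.of_finite_image (f := fun r : ℝ => ((r:ℝ) : Circle1))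
  · exact hC.subset (by rintro t ⟨r, ⟨hr, _⟩, rfl⟩; exact hr)
  · rintro x ⟨_, hx⟩ y ⟨_, hy⟩ hxy
    apply coe_inj_of_abs_lt _ hxy
    rw [abs_sub_lt_iff]
    simp only [mem_Ico] at hx hy
    constructor <;> linarith

lemma finite_reps' {C : Set Circle1} (hC : C.Finite) {a b : ℝ} (hab : b ≤ a + 1) :
    {r : ℝ | ((r:ℝ) : Circle1) ∈ C ∧ r ∈ Ioc a b}.Finite := by
  apply Set.Finite.of_finite_image (f := fun r : ℝ => ((r:ℝ) : Circle1))
  · exact hC.subset (by rintro t ⟨r, ⟨hr, _⟩, rfl⟩; exact hr)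
  · rintro x ⟨_, hx⟩ y ⟨_, hy⟩ hxy
    apply coe_inj_of_abs_lt _ hxy
    rw [abs_sub_lt_iff]
    simp only [mem_Ioc] at hx hy
    constructor <;> linarith

/-- `(a, c)` is a gap of `C` lifted to `ℝ`. -/
def GapR (C : Set Circle1) (a c : ℝ) : Prop :=
  ((a:ℝ) : Circle1) ∈ C ∧ ((c:ℝ) : Circle1) ∈ C ∧ a < c ∧
    ∀ z ∈ Ioo a c, ((z:ℝ) : Circle1) ∉ C

lemma GapR.unique {C : Set Circle1} {a c c' : ℝ} (h : GapR C a c) (h' : GapR C a c') :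
    c = c' := by
  rcases lt_trichotomy c c' with hlt | he | hgt
  · exact absurd h.2.1 (h'.2.2.2 c ⟨h.2.2.1, hlt⟩)
  · exact he
  · exact absurd h'.2.1 (h.2.2.2 c' ⟨h'.2.2.1, hgt⟩)

lemma GapR.shift {C : Set Circle1} {a c : ℝ} (h : GapR C a c) (n : ℤ) :
    GapR C (a + n) (c + n) := by
  obtain ⟨ha, hc, hac, hgap⟩ := h
  refine ⟨by rwa [coe_shift], by rwa [coe_shift], by linarith, ?_⟩
  intro z hz hzC
  have : ((z - n : ℝ) : Circle1) ∈ C := by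
    have := coe_shift (z - n) n
    rw [sub_add_cancel] at this
    rw [← this]; exact hzC
  exact hgap (z - n) (by simp only [mem_Ioo] at hz ⊢; constructor <;> linarith) this

/-- Existence of a gap around any point not in `C`. -/
lemma exists_gapR {C : Set Circle1} (hCfin : C.Finite) (hCne : C.Nonempty) {x : ℝ}
    (hx : ((x:ℝ) : Circle1) ∉ C) : ∃ a c, GapR C a c ∧ x ∈ Ioo a c := by
  -- the set of C-representatives in [x-1, x)
  set S : Set ℝ := {r : ℝ | ((r:ℝ) : Circle1) ∈ C ∧ r ∈ Ico (x-1) x} with hS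
  have hSfin : S.Finite := finite_reps hCfin (by linarith)
  have hSne : S.Nonempty := by
    obtain ⟨t0, ht0⟩ := hCne
    obtain ⟨r0, hr0⟩ := QuotientAddGroup.mk_surjective t0
    refine ⟨r0 - ⌊r0 - (x-1)⌋, ?_, ?_⟩
    · show ((r0 - ⌊r0 - (x-1)⌋ : ℝ) : Circle1) ∈ C
      have : ((r0 - ⌊r0 - (x-1)⌋ + (⌊r0 - (x-1)⌋ : ℤ) : ℝ) : Circle1)
          = ((r0 - ⌊r0 - (x-1)⌋ : ℝ) : Circle1) := coe_shift _ _
      rw [sub_add_cancel] at this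
      rw [← this, hr0]; exact ht0
    · have h1 := Int.floor_le (r0 - (x-1))
      have h2 := Int.sub_one_lt_floor (r0 - (x-1))
      constructor <;> [linarith; linarith]
  obtain ⟨a, haS, hamax⟩ := Set.exists_max_image S id hSfin hSne
  -- the set of C-representatives in (a, a+1]
  set S' : Set ℝ := {r : ℝ | ((r:ℝ) : Circle1) ∈ C ∧ r ∈ Ioc a (a+1)} with hS'
  have hS'fin : S'.Finite := finite_reps' hCfin le_rfl
  have hS'ne : S'.Nonempty := ⟨a + 1, by
    refine ⟨?_, by constructor <;> linarith⟩
    have : ((a + (1:ℤ) : ℝ) : Circle1) = (a : Circle1) := coe_shift a 1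
    simp only [Int.cast_one] at this
    rw [this]; exact haS.1⟩
  obtain ⟨c, hcS', hcmin⟩ := Set.exists_min_image S' id hS'fin hS'ne
  have hax : a < x := haS.2.2
  have hxc : x < c := by
    by_contra h
    push_neg at h
    have hcx : c < x := lt_of_le_of_ne h (fun h' => hx (h' ▸ hcS'.1))
    have : c ∈ S := ⟨hcS'.1, ⟨by linarith [hcS'.2.1, haS.2.1], hcx⟩⟩
    exact absurd (hamax c this) (by simp; linarith [hcS'.2.1])
  refine ⟨a, c, ⟨haS.1, hcS'.1, by linarith, ?_⟩, hax, hxc⟩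
  intro z hz hzC
  have : z ∈ S' := ⟨hzC, ⟨hz.1, by linarith [hz.2, hcS'.2.2]⟩⟩
  exact absurd (hcmin z this) (by simp; exact hz.2)

section Dyn

variable {C C' : Set Circle1} {g : Circle1 → Circle1} {G : CircleDeg1Lift}

/-- Strict monotonicity of the lift on lifts of points of `C ∪ C'`. -/
lemma strictG (hlift : IsLift g G) (hg : ∀ t ∈ C ∪ C', g t = md 3 t)
    (hinj : Set.InjOn (md 3) (C ∪ C'))
    {u v : ℝ} (hu : ((u:ℝ) : Circle1) ∈ C ∪ C') (hv : ((v:ℝ) : Circle1) ∈ C ∪ C')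
    (huv : u < v) : G u < G v := by
  by_cases he : ((u:ℝ) : Circle1) = (v : Circle1)
  · obtain ⟨n, hn⟩ := coe_eq_coe_iff'.mp he
    have hn1 : (1:ℝ) ≤ n := by
      have : (0:ℝ) < n := by linarith [hn ▸ huv]
      exact_mod_cast (by exact_mod_cast this : (0:ℤ) < n)
    rw [hn, G.map_add_int]
    linarith [hn1]
  · have hne : G u ≠ G v := by
      intro h
      apply he
      have h1 : md 3 ((u:ℝ) : Circle1) = md 3 ((v:ℝ) : Circle1) := by
        rw [← hg _ hu, ← hg _ hv, hlift, hlift, h]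
      exact hinj hu hv h1
    exact lt_of_le_of_ne (G.monotone huv.le) hne

/-- image of a point of `C` under `G` projects to `md 3` of the projection, staying in `C`. -/
lemma memG (hlift : IsLift g G) (hg : ∀ t ∈ C ∪ C', g t = md 3 t)
    (hCinv : md 3 '' C = C) {u : ℝ} (hu : ((u:ℝ) : Circle1) ∈ C) :
    ((G u : ℝ) : Circle1) ∈ C ∧ ((G u : ℝ) : Circle1) = md 3 ((u:ℝ) : Circle1) := by
  have h : ((G u : ℝ) : Circle1) = md 3 ((u:ℝ) : Circle1) := by
    rw [← hlift, hg _ (Or.inl hu)]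
  exact ⟨h ▸ (hCinv ▸ Set.mem_image_of_mem _ hu), h⟩

lemma memG' (hlift : IsLift g G) (hg : ∀ t ∈ C ∪ C', g t = md 3 t)
    (hC'inv : md 3 '' C' = C') {u : ℝ} (hu : ((u:ℝ) : Circle1) ∈ C') :
    ((G u : ℝ) : Circle1) ∈ C' := by
  have h : ((G u : ℝ) : Circle1) = md 3 ((u:ℝ) : Circle1) := by
    rw [← hlift, hg _ (Or.inr hu)]
  exact h ▸ (hC'inv ▸ Set.mem_image_of_mem _ hu)

/-- `G` maps a gap of `C` onto a gap of `C`, and carries interior `C'`-points along. -/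
lemma gap_step (hlift : IsLift g G) (hg : ∀ t ∈ C ∪ C', g t = md 3 t)
    (hinj : Set.InjOn (md 3) (C ∪ C')) (hCinv : md 3 '' C = C) (hC'inv : md 3 '' C' = C')
    {a c : ℝ} (hgap : GapR C a c) : GapR C (G a) (G c) ∧
      ∀ y ∈ Ioo a c, ((y:ℝ) : Circle1) ∈ C' → G y ∈ Ioo (G a) (G c) ∧
        ((G y : ℝ) : Circle1) ∈ C' := by
  obtain ⟨ha, hc, hac, hgapP⟩ := hgap
  have hGa := memG hlift hg hCinv ha
  have hGc := memG hlift hg hCinv hc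
  have hGac : G a < G c := strictG hlift hg hinj (Or.inl ha) (Or.inl hc) hac
  have hbetween : ∀ z ∈ Ioo (G a) (G c), ((z:ℝ) : Circle1) ∉ C := by
    intro z hz hzC
    -- z projects into C = md 3 '' C, so z = G r' for some r' with ↑r' ∈ C
    obtain ⟨u, huC, huz⟩ := hCinv ▸ hzC
    obtain ⟨r, hr⟩ := QuotientAddGroup.mk_surjective u
    have hGr : ((G r : ℝ) : Circle1) = ((z:ℝ) : Circle1) := by
      rw [← hlift, hr, hg _ (Or.inl (hr ▸ huC)), huz]
    obtain ⟨n, hn⟩ := coe_eq_coe_iff'.mp hGr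
    set r' := r + n with hr'
    have hr'C : ((r' : ℝ) : Circle1) ∈ C := by rw [hr', coe_shift, hr]; exact huC
    have hGr' : G r' = z := by rw [hr', G.map_add_int, ← hn]
    have har' : a < r' := by
      by_contra h
      push_neg at h
      have := G.monotone h
      rw [hGr'] at this
      exact absurd hz.1 (not_lt.mpr this)
    have hr'c : r' < c := by
      by_contra h
      push_neg at h
      have := G.monotone h
      rw [hGr'] at this
      exact absurd hz.2 (not_lt.mpr this)
    exact hgapP r' ⟨har', hr'c⟩ hr'C
  refine ⟨⟨hGa.1, hGc.1, hGac, hbetween⟩, ?_⟩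
  intro y hy hyC'
  refine ⟨⟨strictG hlift hg hinj (Or.inl ha) (Or.inr hyC') hy.1,
    strictG hlift hg hinj (Or.inr hyC') (Or.inl hc) hy.2⟩,
    memG' hlift hg hC'inv hyC'⟩

/-- Iterated version of `gap_step`, also tracking the projection of the left endpoint. -/
lemma gap_iter (hlift : IsLift g G) (hg : ∀ t ∈ C ∪ C', g t = md 3 t)
    (hinj : Set.InjOn (md 3) (C ∪ C')) (hCinv : md 3 '' C = C) (hC'inv : md 3 '' C' = C')
    {a c y : ℝ} (hgap : GapR C a c) (hy : y ∈ Ioo a c) (hyC' : ((y:ℝ) : Circle1) ∈ C') :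
    ∀ k : ℕ, GapR C ((⇑G)^[k] a) ((⇑G)^[k] c) ∧
      (⇑G)^[k] y ∈ Ioo ((⇑G)^[k] a) ((⇑G)^[k] c) ∧
      (((⇑G)^[k] y : ℝ) : Circle1) ∈ C' ∧
      ((((⇑G)^[k] a : ℝ)) : Circle1) = (md 3)^[k] ((a:ℝ) : Circle1) := by
  intro k
  induction k with
  | zero => exact ⟨hgap, hy, hyC', rfl⟩
  | succ k ih =>
    obtain ⟨ihgap, ihy, ihyC', ihproj⟩ := ih
    obtain ⟨hgap', hstep⟩ := gap_step hlift hg hinj hCinv hC'inv ihgap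
    obtain ⟨hy', hyC''⟩ := hstep _ ihy ihyC'
    simp only [Function.iterate_succ_apply']
    exact ⟨hgap', hy', hyC'', by rw [(memG hlift hg hCinv ihgap.1).2, ihproj]⟩

/-- Main propagation: every gap of `C` contains a point of `C'`. -/
lemma gap_meets (hlift : IsLift g G) (hg : ∀ t ∈ C ∪ C', g t = md 3 t)
    (hinj : Set.InjOn (md 3) (C ∪ C')) (hCinv : md 3 '' C = C) (hC'inv : md 3 '' C' = C')
    (hCfin : C.Finite) (hCne : C.Nonempty) (hC'ne : C'.Nonempty)
    (hdisj : ∀ z, z ∈ C → z ∈ C' → False)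
    (htrans : ∀ u ∈ C, ∀ v ∈ C, ∃ k, (md 3)^[k] u = v)
    {a c : ℝ} (hgap : GapR C a c) :
    ∃ y ∈ Ioo a c, ((y:ℝ) : Circle1) ∈ C' := by
  obtain ⟨t0, ht0⟩ := hC'ne
  obtain ⟨r0, hr0⟩ := QuotientAddGroup.mk_surjective t0
  have hr0C : ((r0 : ℝ) : Circle1) ∉ C := fun h => hdisj _ h (hr0 ▸ ht0)
  obtain ⟨m, cm, hgm, hr0m⟩ := exists_gapR hCfin hCne hr0C
  obtain ⟨k, hk⟩ := htrans _ hgm.1 _ hgap.1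
  obtain ⟨hgapk, hyk, hykC', hprojk⟩ :=
    gap_iter hlift hg hinj hCinv hC'inv hgm hr0m (hr0 ▸ ht0) k
  -- (⇑G)^[k] m projects to the same point as a
  have : (((⇑G)^[k] m : ℝ) : Circle1) = ((a:ℝ) : Circle1) := by rw [hprojk, hk]
  obtain ⟨n, hn⟩ := coe_eq_coe_iff'.mp this
  have hgapshift := hgapk.shift n
  rw [← hn] at hgapshift
  have hceq : (⇑G)^[k] cm + n = c := hgapshift.unique hgap
  refine ⟨(⇑G)^[k] r0 + n, ?_, by rw [coe_shift]; exact hykC'⟩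
  rw [← hceq]
  constructor
  · have := hyk.1; rw [hn] at *; simp only [mem_Ioo] at *; linarith [hyk.1]
  · simp only [mem_Ioo] at *; linarith [hyk.2]

end Dyn

/-- One direction of the superlinking statement. -/
lemma half (C C' : Set Circle1)
    (hCfin : C.Finite) (hCne : C.Nonempty) (hC'ne : C'.Nonempty)
    (hdisj : ∀ z, z ∈ C → z ∈ C' → False)
    (hCinv : md 3 '' C = C) (hC'inv : md 3 '' C' = C')
    (hinj : Set.InjOn (md 3) (C ∪ C'))
    (htrans : ∀ u ∈ C, ∀ v ∈ C, ∃ k, (md 3)^[k] u = v)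
    (g : Circle1 → Circle1) (G : CircleDeg1Lift) (hlift : IsLift g G)
    (hg : ∀ t ∈ C ∪ C', g t = md 3 t) :
    ∀ t ∈ Cᶜ, (connectedComponentIn Cᶜ t ∩ C').Nonempty := by
  intro t ht
  obtain ⟨x, hx⟩ := QuotientAddGroup.mk_surjective t
  have hxC : ((x:ℝ) : Circle1) ∉ C := hx ▸ ht
  obtain ⟨a, c, hgap, hxin⟩ := exists_gapR hCfin hCne hxC
  obtain ⟨y, hyin, hyC'⟩ := gap_meets hlift hg hinj hCinv hC'inv hCfin hCne hC'ne hdisj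
    htrans hgap
  set I : Set Circle1 := (fun r : ℝ => ((r:ℝ) : Circle1)) '' Ioo a c with hI
  have hIconn : IsPreconnected I :=
    isPreconnected_Ioo.image _ ((AddCircle.continuous_mk' 1).continuousOn)
  have hIsub : I ⊆ Cᶜ := by
    rintro _ ⟨z, hz, rfl⟩
    exact hgap.2.2.2 z hz
  have htI : t ∈ I := ⟨x, hxin, hx⟩
  have hIcomp : I ⊆ connectedComponentIn Cᶜ t :=
    hIconn.subset_connectedComponentIn htI hIsub
  exact ⟨((y:ℝ) : Circle1), hIcomp ⟨y, hyin, rfl⟩, hyC'⟩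

section Orbit

/-- A periodic orbit is invariant: `md d '' C = C`. -/
lemma orbit_inv {d : ℕ} {t : Circle1} {n : ℕ} (hn : 0 < n) (ht : (md d)^[n] t = t) :
    md d '' (Set.range fun k : Fin n => (md d)^[(k : ℕ)] t)
      = Set.range fun k : Fin n => (md d)^[(k : ℕ)] t := by
  ext z
  constructor
  · rintro ⟨_, ⟨k, rfl⟩, rfl⟩
    simp only
    by_cases h : (k : ℕ) + 1 < n
    · exact ⟨⟨(k : ℕ) + 1, h⟩, by simp [← Function.iterate_succ_apply' (md d)]⟩
    · have hk : (k : ℕ) + 1 = n := by omega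
      refine ⟨⟨0, hn⟩, ?_⟩
      simp only [Function.iterate_zero_apply]
      rw [← Function.iterate_succ_apply' (md d), Nat.succ_eq_add_one, hk, ht]
  · rintro ⟨k, rfl⟩
    simp only
    by_cases h : (k : ℕ) = 0
    · refine ⟨(md d)^[n-1] t, ⟨⟨n-1, by omega⟩, rfl⟩, ?_⟩
      rw [← Function.iterate_succ_apply' (md d), Nat.succ_eq_add_one]
      have : n - 1 + 1 = n := by omega
      rw [this, ht, h, Function.iterate_zero_apply]
    · refine ⟨(md d)^[(k:ℕ)-1] t, ⟨⟨(k:ℕ)-1, by omega⟩, rfl⟩, ?_⟩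
      rw [← Function.iterate_succ_apply' (md d)]
      congr 1
      omega

/-- Transitivity of `md d` on a periodic orbit. -/
lemma orbit_trans {d : ℕ} {t : Circle1} {n : ℕ} (hn : 0 < n) (ht : (md d)^[n] t = t) :
    ∀ u ∈ (Set.range fun k : Fin n => (md d)^[(k : ℕ)] t),
      ∀ v ∈ (Set.range fun k : Fin n => (md d)^[(k : ℕ)] t),
        ∃ k, (md d)^[k] u = v := by
  rintro _ ⟨i, rfl⟩ _ ⟨j, rfl⟩
  refine ⟨(j : ℕ) + (n - (i : ℕ)), ?_⟩
  simp only
  rw [← Function.iterate_add_apply]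
  have h1 : (j : ℕ) + (n - (i : ℕ)) + (i : ℕ) = (j : ℕ) + n := by
    have := i.2
    omega
  rw [h1, Function.iterate_add_apply, ht]

/-- Any point of a periodic orbit generates it as forward orbit. -/
lemma orbit_eq_of_mem {d : ℕ} {t : Circle1} {n : ℕ} (hn : 0 < n) (ht : (md d)^[n] t = t)
    {z : Circle1} (hz : z ∈ (Set.range fun k : Fin n => (md d)^[(k : ℕ)] t)) :
    (Set.range fun k : Fin n => (md d)^[(k : ℕ)] t)
      = Set.range (fun k : ℕ => (md d)^[k] z) := by
  obtain ⟨i, rfl⟩ := hz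
  ext w
  constructor
  · rintro ⟨j, rfl⟩
    refine ⟨(j : ℕ) + (n - (i : ℕ)), ?_⟩
    simp only
    rw [← Function.iterate_add_apply]
    have h1 : (j : ℕ) + (n - (i : ℕ)) + (i : ℕ) = (j : ℕ) + n := by
      have := i.2
      omega
    rw [h1, Function.iterate_add_apply, ht]
  · rintro ⟨k, rfl⟩
    simp only
    rw [← Function.iterate_add_apply]
    -- (md d)^[k + i] t ∈ range: reduce exponent mod n using periodicity
    have key : ∀ m : ℕ, (md d)^[m] t ∈ (Set.range fun k : Fin n => (md d)^[(k : ℕ)] t) := by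
      intro m
      induction m using Nat.strong_induction_on with
      | _ m ih =>
        by_cases h : m < n
        · exact ⟨⟨m, h⟩, rfl⟩
        · have h2 : m - n + n = m := by omega
          have : (md d)^[m] t = (md d)^[m - n] t := by
            conv_lhs => rw [← h2]
            rw [Function.iterate_add_apply, ht]
          rw [this]
          exact ih (m - n) (by omega)
    exact key _

end Orbit

end SuperAux

/-- Two distinct periodic orbits of `m_3` contained in a common rotation
set are superlinked: each gap of one meets the other. -/
theorem cycles_in_rotation_set_superlinked
    (X : Set Circle1) (hX : IsRotationSet 3 X)
    (C C' : Set Circle1) (hC : IsPeriodicOrbit 3 C) (hC' : IsPeriodicOrbit 3 C')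
    (hCX : C ⊆ X) (hC'X : C' ⊆ X) (hne : C ≠ C') :
    (∀ t ∈ Cᶜ, (connectedComponentIn Cᶜ t ∩ C').Nonempty) ∧
    (∀ t ∈ C'ᶜ, (connectedComponentIn C'ᶜ t ∩ C).Nonempty) := by
  obtain ⟨hXne, hXcomp, hXinv, g, ⟨G, hlift⟩, hgX⟩ := hX
  obtain ⟨t1, n1, hn1, ht1, hC1⟩ := hC
  obtain ⟨t2, n2, hn2, ht2, hC2⟩ := hC'
  have hCfin : C.Finite := hC1 ▸ Set.finite_range _
  have hC'fin : C'.Finite := hC2 ▸ Set.finite_range _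
  have hCne : C.Nonempty := hC1 ▸ ⟨_, ⟨⟨0, hn1⟩, rfl⟩⟩
  have hC'ne : C'.Nonempty := hC2 ▸ ⟨_, ⟨⟨0, hn2⟩, rfl⟩⟩
  have hCinv : md 3 '' C = C := by rw [hC1]; exact SuperAux.orbit_inv hn1 ht1
  have hC'inv : md 3 '' C' = C' := by rw [hC2]; exact SuperAux.orbit_inv hn2 ht2
  have hdisj : ∀ z, z ∈ C → z ∈ C' → False := by
    intro z hzC hzC'
    apply hne
    have e1 := SuperAux.orbit_eq_of_mem hn1 ht1 (hC1 ▸ hzC)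
    have e2 := SuperAux.orbit_eq_of_mem hn2 ht2 (hC2 ▸ hzC')
    rw [hC1, hC2, e1, e2]
  have hinj : Set.InjOn (md 3) (C ∪ C') := by
    have hfin : (C ∪ C').Finite := hCfin.union hC'fin
    have himg : md 3 '' (C ∪ C') = C ∪ C' := by rw [Set.image_union, hCinv, hC'inv]
    have hmaps : Set.MapsTo (md 3) (C ∪ C') (C ∪ C') := fun x hx =>
      himg ▸ Set.mem_image_of_mem _ hx
    have hsurj : Set.SurjOn (md 3) (C ∪ C') (C ∪ C') := le_of_eq himg.symm
    exact ((hfin.surjOn_iff_bijOn_of_mapsTo hmaps).mp hsurj).injOn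
  have htransC : ∀ u ∈ C, ∀ v ∈ C, ∃ k, (md 3)^[k] u = v := by
    rw [hC1]; exact SuperAux.orbit_trans hn1 ht1
  have htransC' : ∀ u ∈ C', ∀ v ∈ C', ∃ k, (md 3)^[k] u = v := by
    rw [hC2]; exact SuperAux.orbit_trans hn2 ht2
  have hgCC' : ∀ t ∈ C ∪ C', g t = md 3 t := by
    intro t htt
    rcases htt with h | h
    · exact hgX t (hCX h)
    · exact hgX t (hC'X h)
  constructor
  · exact SuperAux.half C C' hCfin hCne hC'ne hdisj hCinv hC'inv hinj htransC g G hlift hgCC'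
  · exact SuperAux.half C' C hC'fin hC'ne hCne (fun z h h' => hdisj z h' h) hC'inv hCinv
      (Set.union_comm C C' ▸ hinj) htransC' g G hlift (Set.union_comm C C' ▸ hgCC')
end
end

section
/- The set {0, 1/2} ⊂ 𝕋 is a rotation set for m_3 with rotation number 0, it is the union of two distinct periodic orbits of m_3 (namely the two fixed points 0 and 1/2 of m_3), and it is the unique rotation set for m_3 with rotation number 0 that is the union of two distinct periodic orbits of m_3. -/
open Set MeasureTheory ENNReal

noncomputable section

-- AUX START
lemma coe_int_zero' (q : ℤ) : ((q : ℝ) : Circle1) = 0 :=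
  (AddCircle.coe_eq_zero_iff _).2 ⟨q, by simp⟩

lemma coe_add_int' (x : ℝ) (q : ℤ) : ((x + q : ℝ) : Circle1) = (x : Circle1) := by
  rw [AddCircle.coe_add, coe_int_zero', add_zero]

lemma coe_eq_coe_iff' {x y : ℝ} : (x : Circle1) = (y : Circle1) ↔ ∃ k : ℤ, (k : ℝ) = x - y := by
  rw [← sub_eq_zero, ← AddCircle.coe_sub, AddCircle.coe_eq_zero_iff]
  simp

lemma zero_ne_half' : ((0 : ℝ) : Circle1) ≠ ((1/2 : ℝ) : Circle1) := by
  intro h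
  obtain ⟨k, hk⟩ := coe_eq_coe_iff'.1 h
  have h2 : ((2*k : ℤ) : ℝ) = ((-1 : ℤ) : ℝ) := by push_cast; linarith
  have := Int.cast_injective h2
  omega

lemma md3_zero' : md 3 ((0 : ℝ) : Circle1) = ((0 : ℝ) : Circle1) := by
  show (3 : ℕ) • ((0:ℝ) : Circle1) = _
  rw [← AddCircle.coe_nsmul]
  norm_num

lemma md3_half' : md 3 ((1/2 : ℝ) : Circle1) = ((1/2 : ℝ) : Circle1) := by
  show (3 : ℕ) • ((1/2 : ℝ) : Circle1) = _
  rw [← AddCircle.coe_nsmul]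
  have : (3 : ℕ) • (1/2 : ℝ) = 1/2 + (1 : ℤ) := by norm_num
  rw [this, coe_add_int']

lemma fixed_md3' {t : Circle1} (h : md 3 t = t) :
    t = ((0 : ℝ) : Circle1) ∨ t = ((1/2 : ℝ) : Circle1) := by
  induction t using QuotientAddGroup.induction_on with
  | H x =>
    have h3 : ((3 • x : ℝ) : Circle1) = (x : Circle1) := by
      rw [AddCircle.coe_nsmul]; exact h
    obtain ⟨k, hk⟩ := coe_eq_coe_iff'.1 h3
    have hx : x = (k : ℝ) / 2 := by
      have : (3:ℕ) • x = 3 * x := by push_cast [nsmul_eq_mul]; ring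
      rw [this] at hk; linarith
    rcases Int.even_or_odd k with ⟨q, hq⟩ | ⟨q, hq⟩
    · left
      have : x = 0 + (q : ℝ) := by rw [hx, hq]; push_cast; ring
      rw [this, coe_add_int' 0 q]
    · right
      have : x = 1/2 + (q : ℝ) := by rw [hx, hq]; push_cast; ring
      rw [this, coe_add_int' (1/2) q]

lemma monotone_fix_of_iterate' {H : ℝ → ℝ} (hm : Monotone H) {x : ℝ} {n : ℕ}
    (hn : 0 < n) (h : H^[n] x = x) : H x = x := by
  rcases lt_trichotomy (H x) x with hlt | heq | hgt
  · have key : ∀ j, H^[j] (H x) ≤ H x := by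
      intro j
      induction j with
      | zero => simp
      | succ j ih =>
        rw [Function.iterate_succ_apply']
        exact (hm ih).trans (hm hlt.le)
    obtain ⟨j, rfl⟩ := Nat.exists_eq_succ_of_ne_zero hn.ne'
    rw [Function.iterate_succ_apply] at h
    have := key j
    rw [h] at this
    exact absurd this (not_le.2 hlt)
  · exact heq
  · have key : ∀ j, H x ≤ H^[j] (H x) := by
      intro j
      induction j with
      | zero => simp
      | succ j ih =>
        rw [Function.iterate_succ_apply']
        exact (hm hgt.le).trans (hm ih)
    obtain ⟨j, rfl⟩ := Nat.exists_eq_succ_of_ne_zero hn.ne'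
    rw [Function.iterate_succ_apply] at h
    have := key j
    rw [h] at this
    exact absurd this (not_le.2 hgt)

lemma iterate_mod_eq' {α : Type*} {f : α → α} {t0 : α} {n : ℕ} (h : f^[n] t0 = t0) (m : ℕ) :
    f^[m] t0 = f^[m % n] t0 := by
  conv_lhs => rw [← Nat.mod_add_div m n, Function.iterate_add_apply, Function.iterate_mul,
    Function.iterate_fixed h (m / n)]

lemma orbit_props' {C : Set Circle1} (h : IsPeriodicOrbit 3 C) :
    C.Nonempty ∧ (∀ s ∈ C, md 3 s ∈ C) ∧ (∀ s ∈ C, ∃ n, 0 < n ∧ (md 3)^[n] s = s) := by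
  obtain ⟨t0, n, hn, hfix, rfl⟩ := h
  refine ⟨⟨t0, ⟨⟨0, hn⟩, by simp⟩⟩, ?_, ?_⟩
  · rintro s ⟨⟨k, hk⟩, rfl⟩
    refine ⟨⟨(k+1) % n, Nat.mod_lt _ hn⟩, ?_⟩
    show (md 3)^[(k+1) % n] t0 = md 3 ((md 3)^[k] t0)
    rw [← iterate_mod_eq' hfix (k+1), Function.iterate_succ_apply']
  · rintro s ⟨⟨k, hk⟩, rfl⟩
    refine ⟨n, hn, ?_⟩
    show (md 3)^[n] ((md 3)^[k] t0) = (md 3)^[k] t0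
    rw [← Function.iterate_add_apply, add_comm, Function.iterate_add_apply, hfix]

lemma fix_of_mem' {X : Set Circle1} (hX : IsRotationSetWith 3 X ((0 : ℝ) : Circle1))
    (hinv : ∀ t ∈ X, md 3 t ∈ X) (hper : ∀ t ∈ X, ∃ n, 0 < n ∧ (md 3)^[n] t = t)
    {t : Circle1} (ht : t ∈ X) : md 3 t = t := by
  obtain ⟨-, -, -, g, hg, G, hlift, hρ⟩ := hX
  -- translation number is an integer m
  obtain ⟨m, hm⟩ : ∃ m : ℤ, (m : ℝ) = G.translationNumber := by
    have h0 : ((G.translationNumber : ℝ) : Circle1) = ((0:ℝ) : Circle1) := hρ.symm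
    obtain ⟨k, hk⟩ := coe_eq_coe_iff'.1 h0
    exact ⟨k, by linarith⟩
  obtain ⟨n, hn, hfix⟩ := hper t ht
  have hiter_mem : ∀ j, (md 3)^[j] t ∈ X := by
    intro j
    induction j with
    | zero => exact ht
    | succ j ih => rw [Function.iterate_succ_apply']; exact hinv _ ih
  have hgiter : ∀ j, g^[j] t = (md 3)^[j] t := by
    intro j
    induction j with
    | zero => rfl
    | succ j ih =>
      rw [Function.iterate_succ_apply', Function.iterate_succ_apply', ih]
      exact hg _ (hiter_mem j)
  induction t using QuotientAddGroup.induction_on with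
  | H x =>
    have hGiter : ∀ j, g^[j] ((x:ℝ) : Circle1) = ((G^[j] x : ℝ) : Circle1) := by
      intro j
      induction j with
      | zero => rfl
      | succ j ih =>
        rw [Function.iterate_succ_apply', Function.iterate_succ_apply', ih, hlift]
    have hGn : ((G^[n] x : ℝ) : Circle1) = ((x : ℝ) : Circle1) := by
      rw [← hGiter, hgiter, hfix]
    obtain ⟨k, hk⟩ := coe_eq_coe_iff'.1 hGn
    have hpow : (G ^ n) x = x + k := by
      rw [CircleDeg1Lift.coe_pow]; linarith
    have hτ : G.translationNumber = (k : ℝ) / n :=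
      G.translationNumber_of_map_pow_eq_add_int hpow hn
    have hk_nm : (k : ℝ) = n * m := by
      have hn' : (n : ℝ) ≠ 0 := Nat.cast_ne_zero.2 hn.ne'
      rw [hτ] at hm
      field_simp at hm
      linarith
    set H : ℝ → ℝ := fun y => G y - m with hH
    have hHm : Monotone H := fun a b hab => sub_le_sub_right (G.monotone hab) _
    have hHj : ∀ j : ℕ, H^[j] x = G^[j] x - j * m := by
      intro j
      induction j with
      | zero => simp
      | succ j ih =>
        rw [Function.iterate_succ_apply', Function.iterate_succ_apply', ih, hH]
        have : G.toFun (G^[j] x - ↑j * ↑m) = G (G^[j] x - ((j * m : ℤ) : ℝ)) := by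
          push_cast; rfl
        show G (G^[j] x - ↑j * ↑m) - ↑m = _
        have h2 : G (G^[j] x - ((j * m : ℤ) : ℝ)) = G (G^[j] x) - ((j * m : ℤ) : ℝ) :=
          G.map_sub_int _ _
        have h3 : (G^[j] x - (j:ℝ) * (m:ℝ)) = G^[j] x - ((j * m : ℤ) : ℝ) := by push_cast; ring
        rw [h3, h2]
        push_cast
        ring
    have hHn : H^[n] x = x := by
      rw [hHj n]
      have : G^[n] x = x + k := by rw [← CircleDeg1Lift.coe_pow]; exact hpow
      rw [this, hk_nm]
      ring
    have hHx : H x = x := monotone_fix_of_iterate' hHm hn hHn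
    have hGx : G x = x + (m : ℝ) := by
      have : G x - m = x := hHx
      linarith
    have hgx : g ((x:ℝ) : Circle1) = ((x:ℝ) : Circle1) := by
      rw [hlift, hGx, coe_add_int']
    rw [← hg _ ht, hgx]

lemma orbit_singleton' {t : Circle1} (h : md 3 t = t) : IsPeriodicOrbit 3 {t} := by
  refine ⟨t, 1, one_pos, by simpa using h, ?_⟩
  rw [Set.range_unique]
  rfl

/-- `{0, 1/2}` is the unique rotation set for `m_3` with rotation number
`0` which is the union of two distinct periodic orbits (namely the two fixed points
`0` and `1/2` of `m_3`). -/
theorem zero_half_unique_rotation_set_m3 :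
    IsRotationSetWith 3 ({((0 : ℝ) : Circle1), ((1 / 2 : ℝ) : Circle1)} : Set Circle1)
      ((0 : ℝ) : Circle1) ∧
    md 3 ((0 : ℝ) : Circle1) = ((0 : ℝ) : Circle1) ∧
    md 3 ((1 / 2 : ℝ) : Circle1) = ((1 / 2 : ℝ) : Circle1) ∧
    IsPeriodicOrbit 3 ({((0 : ℝ) : Circle1)} : Set Circle1) ∧
    IsPeriodicOrbit 3 ({((1 / 2 : ℝ) : Circle1)} : Set Circle1) ∧
    ({((0 : ℝ) : Circle1)} : Set Circle1) ≠ ({((1 / 2 : ℝ) : Circle1)} : Set Circle1) ∧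
    ∀ X : Set Circle1, IsRotationSetWith 3 X ((0 : ℝ) : Circle1) →
      (∃ C C' : Set Circle1, IsPeriodicOrbit 3 C ∧ IsPeriodicOrbit 3 C' ∧
        C ≠ C' ∧ X = C ∪ C') →
      X = ({((0 : ℝ) : Circle1), ((1 / 2 : ℝ) : Circle1)} : Set Circle1) := by
  have h0 := md3_zero'
  have h12 := md3_half'
  refine ⟨?_, h0, h12, orbit_singleton' h0, orbit_singleton' h12,
    fun h => zero_ne_half' (Set.singleton_eq_singleton_iff.1 h), ?_⟩
  · refine ⟨⟨_, Or.inl rfl⟩, (Set.toFinite _).isCompact, ?_, ?_⟩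
    · rw [Set.image_pair, h0, h12]
    · refine ⟨id, ?_, 1, fun x => ?_, ?_⟩
      · rintro t (rfl | rfl)
        · exact h0.symm
        · exact h12.symm
      · simp
      · rw [CircleDeg1Lift.translationNumber_one]
  · rintro X hX ⟨C, C', hC, hC', hne, hXeq⟩
    obtain ⟨hCne, hCinv, hCper⟩ := orbit_props' hC
    obtain ⟨hC'ne, hC'inv, hC'per⟩ := orbit_props' hC'
    have hinv : ∀ t ∈ X, md 3 t ∈ X := by
      rw [hXeq]; rintro t (ht | ht)
      · exact Or.inl (hCinv t ht)
      · exact Or.inr (hC'inv t ht)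
    have hper : ∀ t ∈ X, ∃ n, 0 < n ∧ (md 3)^[n] t = t := by
      rw [hXeq]; rintro t (ht | ht)
      · exact hCper t ht
      · exact hC'per t ht
    have hsub : X ⊆ ({((0 : ℝ) : Circle1), ((1 / 2 : ℝ) : Circle1)} : Set Circle1) :=
      fun t ht => fixed_md3' (fix_of_mem' hX hinv hper ht)
    have hCX : C ⊆ X := hXeq ▸ Set.subset_union_left
    have hC'X : C' ⊆ X := hXeq ▸ Set.subset_union_right
    have hboth : ∀ a : Circle1,
        (({((0 : ℝ) : Circle1), ((1 / 2 : ℝ) : Circle1)} : Set Circle1) \ {a}).Subsingleton →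
        a ∈ X := by
      intro a ha
      by_contra hnotin
      have hXa : X ⊆ ({((0 : ℝ) : Circle1), ((1 / 2 : ℝ) : Circle1)} : Set Circle1) \ {a} :=
        fun t ht => ⟨hsub ht, fun h => hnotin (h ▸ ht)⟩
      obtain ⟨c, hc⟩ := hCne
      obtain ⟨c', hc'⟩ := hC'ne
      apply hne
      ext u
      constructor
      · intro hu
        have := ha (hXa (hCX hu)) (hXa (hC'X hc'))
        rwa [this]
      · intro hu
        have := ha (hXa (hC'X hu)) (hXa (hCX hc))
        rwa [this]
    have h0mem : ((0 : ℝ) : Circle1) ∈ X := by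
      apply hboth
      intro u hu v hv
      simp only [Set.mem_diff, Set.mem_insert_iff, Set.mem_singleton_iff] at hu hv
      rcases hu with ⟨hu1 | hu1, hu2⟩ <;> rcases hv with ⟨hv1 | hv1, hv2⟩ <;>
        first | exact absurd hu1 hu2 | exact absurd hv1 hv2 | (rw [hu1, hv1])
    have h12mem : ((1/2 : ℝ) : Circle1) ∈ X := by
      apply hboth
      intro u hu v hv
      simp only [Set.mem_diff, Set.mem_insert_iff, Set.mem_singleton_iff] at hu hv
      rcases hu with ⟨hu1 | hu1, hu2⟩ <;> rcases hv with ⟨hv1 | hv1, hv2⟩ <;>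
        first | exact absurd hu1 hu2 | exact absurd hv1 hv2 | (rw [hu1, hv1])
    refine Set.Subset.antisymm hsub ?_
    rintro t (rfl | rfl)
    · exact h0mem
    · exact h12mem
end
end

section
/- Let d ≥ 2 and let C ⊆ 𝕋 be a single periodic orbit of m_d which, as a set, is a rotation set for m_d with rotation number p/q (mod ℤ), where q ≥ 1, 0 ≤ p < q and gcd(p,q) = 1. Then C has exactly q elements, and m_d acts on C (in its cyclic order on the circle) as the rotation sending the i-th point to the (i+p)-th point modulo q. -/
open Set MeasureTheory ENNReal

noncomputable section

/-!
Lift `C` to its preimage `Λ ⊆ ℝ`, a discrete set enumerated increasingly by `X : ℤ → ℝ` with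
`X (j + m) = X j + 1`, where `m = #C`. A monotone lift `G` of the extension of `m_d|_C` maps `Λ`
order-isomorphically onto itself, hence acts as a shift `X j ↦ X (j + κ)`. Consequently `m_d`
acts on `C` as `i ↦ i + κ (mod m)` and `G^m (X 0) = X 0 + κ`, so the rotation number is `κ / m`.
Since `C` is a single orbit, `κ` is a unit mod `m`; comparing the reduced fractions `κ / m` and
`p / q` gives `m = q` and `κ ≡ p (mod q)`.
-/

open Function

theorem Circle1.coe_eq_coe_iff {a b : ℝ} : (a : Circle1) = b ↔ ∃ n : ℤ, b = a + n := by
  rw [← AddCommGroup.modEq_iff_eq_mod_zmultiples, AddCommGroup.modEq_iff_eq_add_zsmul]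
  simp

theorem Circle1.exists_strictMono_enum {C : Set Circle1} (hC : C.Finite) :
    ∃ (m : ℕ) (x : Fin m → ℝ), StrictMono x ∧ (∀ i, x i ∈ Ico (0 : ℝ) 1) ∧
      range (fun i => (x i : Circle1)) = C := by
  classical
  set S : Finset ℝ := hC.toFinset.image (fun t => (AddCircle.equivIco 1 0 t : ℝ))
  refine ⟨S.card, S.orderEmbOfFin rfl, (S.orderEmbOfFin rfl).strictMono, fun i => ?_, ?_⟩
  · obtain ⟨t, -, ht⟩ := Finset.mem_image.mp (S.orderEmbOfFin_mem rfl i)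
    rw [← ht]
    simpa using (AddCircle.equivIco 1 0 t).2
  · rw [range_comp' (fun r : ℝ => (r : Circle1)), Finset.range_orderEmbOfFin, Finset.coe_image,
      hC.coe_toFinset, image_image]
    simp [AddCircle.coe_equivIco]

theorem Circle1.strictMono_equivIco_coe {ι : Type*} [Preorder ι] {x : ι → ℝ} (hx : StrictMono x)
    (hxIco : ∀ i, x i ∈ Ico (0 : ℝ) 1) :
    StrictMono fun i => (AddCircle.equivIco 1 0 (x i : Circle1) : ℝ) := by
  have hrep (i : ι) : (AddCircle.equivIco 1 0 (x i : Circle1) : ℝ) = x i :=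
    AddCircle.equivIco_coe_of_mem (by rw [zero_add]; exact hxIco i)
  simpa only [hrep] using hx

theorem exists_eq_add_of_strictMono_of_surjective {s : ℤ → ℤ} (hs : StrictMono s)
    (hsurj : Surjective s) : ∃ κ : ℤ, ∀ j, s j = j + κ := by
  have hsucc (j : ℤ) : s (j + 1) = s j + 1 := by
    simpa [Order.succ_eq_add_one] using (hs.orderIsoOfSurjective s hsurj).map_succ j
  refine ⟨s 0, fun j => ?_⟩
  induction j using Int.induction_on with
  | zero => simp
  | succ n ih => rw [hsucc, ih]; ring
  | pred n ih =>
    have h := hsucc (-n - 1)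
    rw [sub_add_cancel] at h
    linarith

theorem exists_shift_of_bijOn_range {α : Type*} [LinearOrder α] {X : ℤ → α} (hX : StrictMono X)
    {G : α → α} (hG : Monotone G) (hbij : BijOn G (range X) (range X)) :
    ∃ κ : ℤ, ∀ j, G (X j) = X (j + κ) := by
  choose s hs using fun j => hbij.mapsTo (mem_range_self (f := X) j)
  have hGmono : StrictMonoOn G (range X) := hG.monotoneOn _ |>.strictMonoOn_of_injOn hbij.injOn
  have hs_mono : StrictMono s := fun j j' h => by
    have := hGmono (mem_range_self j) (mem_range_self j') (hX h)
    rwa [← hs, ← hs, hX.lt_iff_lt] at this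
  have hs_surj : Surjective s := fun k => by
    obtain ⟨_, ⟨j, rfl⟩, hj⟩ := hbij.surjOn (mem_range_self k)
    exact ⟨j, hX.injective ((hs j).trans hj)⟩
  obtain ⟨κ, hκ⟩ := exists_eq_add_of_strictMono_of_surjective hs_mono hs_surj
  exact ⟨κ, fun j => by rw [← hκ, hs]⟩

theorem IsLift.bijOn_preimage {g : Circle1 → Circle1} {G : CircleDeg1Lift} (hG : IsLift g G)
    {C : Set Circle1} (hC : C.Finite) (hgC : g '' C = C) :
    BijOn G ((↑) ⁻¹' C) ((↑) ⁻¹' C) := by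
  have hmaps : MapsTo G ((↑) ⁻¹' C) ((↑) ⁻¹' C) := fun r hr => by
    rw [mem_preimage, ← hG, ← hgC]
    exact mem_image_of_mem g hr
  have hg_inj : InjOn g C :=
    (hC.surjOn_iff_bijOn_of_mapsTo (fun t ht => hgC ▸ mem_image_of_mem g ht)).mp
      hgC.symm.subset |>.injOn
  refine ⟨hmaps, fun r hr r' hr' h => ?_, fun r hr => ?_⟩
  · obtain ⟨n, rfl⟩ := Circle1.coe_eq_coe_iff.mp (hg_inj hr hr' (by rw [hG, hG, h]))
    rw [G.map_add_int] at h
    simp_all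
  · obtain ⟨t, ht, hgt⟩ := (hgC.symm ▸ hr : (r : Circle1) ∈ g '' C)
    obtain ⟨s, rfl⟩ := QuotientAddGroup.mk_surjective t
    obtain ⟨n, hn⟩ := Circle1.coe_eq_coe_iff.mp ((hG s).symm.trans hgt)
    refine ⟨s + n, ?_, ?_⟩
    · simpa [mem_preimage] using ht
    · rw [G.map_add_int, hn]

theorem CircleDeg1Lift.natCast_mul_translationNumber_of_shift (G : CircleDeg1Lift) {m : ℕ}
    {X : ℤ → ℝ} (hX : ∀ j k : ℤ, X (j + k * m) = X j + k) {κ : ℤ}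
    (hGX : ∀ j, G (X j) = X (j + κ)) : m * G.translationNumber = κ := by
  have hsemi : Semiconj X (· + κ) G := fun j => (hGX j).symm
  have hGm : (G ^ m) (X 0) = X 0 + κ := by
    rw [CircleDeg1Lift.coe_pow, ← (hsemi.iterate_right m) 0, add_right_iterate_apply, ← hX,
      nsmul_eq_mul, mul_comm]
  rw [← G.translationNumber_pow, (G ^ m).translationNumber_of_eq_add_int hGm]

theorem isCoprime_of_iterate_eq_add_one {α : Type*} {f : α → α} {E : ℤ → α} {m : ℕ} {κ : ℤ}
    (hE : ∀ j j', E j = E j' → j ≡ j' [ZMOD m]) (hf : ∀ j, f (E j) = E (j + κ)) {j₀ : ℤ} {k : ℕ}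
    (hk : f^[k] (E j₀) = E (j₀ + 1)) : IsCoprime κ m := by
  have hsemi : Semiconj E (· + κ) f := fun j => (hf j).symm
  rw [← (hsemi.iterate_right k) j₀, add_right_iterate_apply, nsmul_eq_mul] at hk
  obtain ⟨c, hc⟩ := (hE _ _ hk).dvd
  exact ⟨k, c, by linear_combination -hc⟩

theorem eq_and_modEq_of_coe_div_eq_coe_div {κ : ℤ} {m p q : ℕ} (hm : 0 < m) (hq : 0 < q)
    (hκm : IsCoprime κ m) (hpq : Nat.Coprime p q)
    (h : ((κ / m : ℝ) : Circle1) = ((p / q : ℝ) : Circle1)) : m = q ∧ κ ≡ p [ZMOD q] := by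
  obtain ⟨n, hn⟩ := Circle1.coe_eq_coe_iff.mp h
  have hZ : (p : ℤ) * m = κ * q + n * m * q := by
    have : (p : ℝ) * m = κ * q + n * m * q := by
      field_simp at hn
      linear_combination hn
    exact_mod_cast this
  have hqp : IsCoprime (q : ℤ) p := Int.isCoprime_iff_gcd_eq_one.mpr (by simpa using hpq.symm)
  have hmq : (m : ℤ) ∣ q := hκm.symm.dvd_of_dvd_mul_left ⟨p - n * q, by linear_combination -hZ⟩
  have hqm : (q : ℤ) ∣ m := hqp.dvd_of_dvd_mul_left ⟨κ + n * m, by linear_combination hZ⟩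
  obtain rfl : m = q := Nat.dvd_antisymm (by exact_mod_cast hmq) (by exact_mod_cast hqm)
  refine ⟨rfl, Int.modEq_iff_add_fac.mpr ⟨n, ?_⟩⟩
  have hm' : (m : ℤ) ≠ 0 := by exact_mod_cast hm.ne'
  apply mul_right_cancel₀ hm'
  linear_combination hZ

section PeriodicExtension

variable {m : ℕ} [NeZero m]

theorem Int.exists_mul_add_fin_eq (j : ℤ) : ∃ (a : ℤ) (i : Fin m), a * m + i = j :=
  ⟨_, _, (Int.divModEquiv m).symm_apply_apply j⟩

def periodicExtension (x : Fin m → ℝ) (j : ℤ) : ℝ :=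
  x (Int.divModEquiv m j).2 + (Int.divModEquiv m j).1

variable {x : Fin m → ℝ}

theorem periodicExtension_mul_add (a : ℤ) (i : Fin m) :
    periodicExtension x (a * m + i) = x i + a := by
  have h := (Int.divModEquiv m).apply_symm_apply (a, i)
  rw [Int.divModEquiv_symm_apply] at h
  simp only [periodicExtension, h]

theorem periodicExtension_add_mul (j k : ℤ) :
    periodicExtension x (j + k * m) = periodicExtension x j + k := by
  obtain ⟨a, i, rfl⟩ := Int.exists_mul_add_fin_eq (m := m) j
  rw [show a * m + i + k * m = (a + k) * m + i by ring, periodicExtension_mul_add,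
    periodicExtension_mul_add]
  push_cast
  ring

theorem periodicExtension_natCast (i : Fin m) : periodicExtension x (i : ℕ) = x i := by
  simpa using periodicExtension_mul_add (x := x) 0 i

theorem strictMono_periodicExtension (hx : StrictMono x) (hx1 : ∀ i i', x i < x i' + 1) :
    StrictMono (periodicExtension x) := by
  intro j j' hjj'
  obtain ⟨a, i, rfl⟩ := Int.exists_mul_add_fin_eq (m := m) j
  obtain ⟨a', i', rfl⟩ := Int.exists_mul_add_fin_eq (m := m) j'
  rw [periodicExtension_mul_add, periodicExtension_mul_add]
  have hi : (i : ℤ) < m := by exact_mod_cast i.2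
  have hi' : (i' : ℤ) < m := by exact_mod_cast i'.2
  rcases lt_trichotomy a a' with h | rfl | h
  · have : (a : ℝ) + 1 ≤ a' := by exact_mod_cast h
    linarith [hx1 i i']
  · have : i < i' := by rw [Fin.lt_def]; omega
    linarith [hx this]
  · nlinarith

theorem coe_periodicExtension_eq_coe_iff (hX : StrictMono (periodicExtension x)) {j j' : ℤ} :
    (periodicExtension x j : Circle1) = periodicExtension x j' ↔ j ≡ j' [ZMOD m] := by
  rw [Circle1.coe_eq_coe_iff, Int.modEq_iff_add_fac]
  refine ⟨fun ⟨k, hk⟩ => ⟨k, hX.injective ?_⟩, fun ⟨k, hk⟩ => ⟨k, ?_⟩⟩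
  · rw [hk, mul_comm, periodicExtension_add_mul]
  · rw [hk, mul_comm, periodicExtension_add_mul]

theorem preimage_coe_range_eq_range_periodicExtension :
    (↑) ⁻¹' range (fun i => (x i : Circle1)) = range (periodicExtension x) := by
  ext r
  constructor
  · rintro ⟨i, hi⟩
    obtain ⟨k, rfl⟩ := Circle1.coe_eq_coe_iff.mp hi
    exact ⟨k * m + i, periodicExtension_mul_add k i⟩
  · rintro ⟨j, rfl⟩
    obtain ⟨a, i, rfl⟩ := Int.exists_mul_add_fin_eq (m := m) j
    exact ⟨i, Circle1.coe_eq_coe_iff.mpr ⟨a, periodicExtension_mul_add a i⟩⟩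

theorem IsLift.exists_shift_periodicExtension (hX : StrictMono (periodicExtension x))
    {g : Circle1 → Circle1} {G : CircleDeg1Lift} (hG : IsLift g G)
    (hg : g '' range (fun i => (x i : Circle1)) = range fun i => (x i : Circle1)) :
    ∃ κ : ℤ, ∀ j, G (periodicExtension x j) = periodicExtension x (j + κ) :=
  exists_shift_of_bijOn_range hX G.monotone
    (preimage_coe_range_eq_range_periodicExtension (x := x) ▸
      hG.bijOn_preimage (finite_range _) hg)

end PeriodicExtension


theorem cycle_with_rotation_number_structure_general
    (d : ℕ) (C : Set Circle1)
    (p q : ℕ) (hpq : p < q) (hcop : Nat.Coprime p q)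
    (hC : IsPeriodicOrbit d C)
    (hrot : IsRotationSetWith d C ((((p : ℝ) / (q : ℝ)) : ℝ) : Circle1)) :
    C.ncard = q ∧
      ∃ e : Fin q → Circle1,
        Function.Injective e ∧ Set.range e = C ∧
        StrictMono (fun i : Fin q => ((AddCircle.equivIco 1 0 (e i) : ℝ))) ∧
        ∀ i : Fin q, md d (e i) = e (i + ⟨p, hpq⟩) := by
  obtain ⟨hne, -, himg, g, hgC, G, hG, hρ⟩ := hrot
  obtain ⟨t₀, n, hn, -, hCorb⟩ := hC
  obtain ⟨m, x, hx, hxIco, hxC⟩ := Circle1.exists_strictMono_enum (hCorb ▸ finite_range _)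
  obtain ⟨_, ⟨i, -⟩⟩ := hxC ▸ hne
  have : NeZero m := ⟨i.pos.ne'⟩
  set X := periodicExtension x
  have hX : StrictMono X :=
    strictMono_periodicExtension hx fun i i' => by linarith [(hxIco i).2, (hxIco i').1]
  have hXmem (j : ℤ) : (X j : Circle1) ∈ C := by
    rw [← mem_preimage, ← hxC, preimage_coe_range_eq_range_periodicExtension]
    exact mem_range_self j
  obtain ⟨κ, hκ⟩ := hG.exists_shift_periodicExtension hX (hxC ▸ (image_congr hgC).trans himg)
  have hmd (j : ℤ) : md d (X j) = X (j + κ) := by rw [← hgC _ (hXmem j), hG, hκ]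
  have hunit : IsCoprime κ m := by
    obtain ⟨i₀, rfl⟩ : t₀ ∈ range fun i => (x i : Circle1) := hxC ▸ hCorb ▸ ⟨⟨0, hn⟩, rfl⟩
    obtain ⟨k, hk⟩ := hCorb ▸ hXmem (i₀ + 1)
    refine isCoprime_of_iterate_eq_add_one (fun j j' => (coe_periodicExtension_eq_coe_iff hX).mp)
      hmd (j₀ := i₀) (k := k) ?_
    rwa [periodicExtension_natCast]
  have hτ := G.natCast_mul_translationNumber_of_shift periodicExtension_add_mul hκ
  obtain ⟨rfl, hκp⟩ := eq_and_modEq_of_coe_div_eq_coe_div i.pos (p.zero_le.trans_lt hpq) hunit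
    hcop (by rw [hρ, ← hτ, mul_div_cancel_left₀ _ (by exact_mod_cast i.pos.ne')])
  have he_mono := Circle1.strictMono_equivIco_coe hx hxIco
  have he_inj : Injective fun i => (x i : Circle1) :=
    fun i i' h => he_mono.injective (by simp only [h])
  refine ⟨by rw [← hxC, ncard_range_of_injective he_inj, Nat.card_fin], _, he_inj, hxC,
    he_mono, fun i => ?_⟩
  rw [← periodicExtension_natCast (x := x), ← periodicExtension_natCast (x := x), hmd,
    coe_periodicExtension_eq_coe_iff hX, Fin.val_add]
  push_cast
  exact (Int.ModEq.add_left _ hκp).trans (Int.mod_modEq _ _).symm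

/-- A periodic orbit of `m_d` which is a rotation set with rotation
number `p/q` (reduced) has exactly `q` elements, and `m_d` acts on it, in its cyclic order
on the circle, as the rotation sending the `i`-th point to the `(i+p)`-th point mod `q`. -/
theorem cycle_with_rotation_number_structure
    (d : ℕ) (hd : 2 ≤ d) (C : Set Circle1)
    (p q : ℕ) (hq : 1 ≤ q) (hpq : p < q) (hcop : Nat.Coprime p q)
    (hC : IsPeriodicOrbit d C)
    (hrot : IsRotationSetWith d C ((((p : ℝ) / (q : ℝ)) : ℝ) : Circle1)) :
    C.ncard = q ∧
      ∃ e : Fin q → Circle1,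
        Function.Injective e ∧ Set.range e = C ∧
        StrictMono (fun i : Fin q => ((AddCircle.equivIco 1 0 (e i) : ℝ))) ∧
        ∀ i : Fin q, md d (e i) = e (i + ⟨p, hpq⟩) :=
  cycle_with_rotation_number_structure_general d C p q hpq hcop hC hrot
end
end

section
/- Let d ≥ 2 and let X ⊆ 𝕋 be a finite rotation set for m_d. Then the rotation number ρ(X) ∈ ℝ/ℤ is rational, i.e. ρ(X) is the residue class of a rational number; equivalently, every point of X is periodic or preperiodic under m_d and X contains a periodic orbit realizing ρ(X). -/
open Set MeasureTheory ENNReal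

noncomputable section

/-- Iterates of a lift project to iterates of the circle map. -/
lemma IsLift.iterate {g : Circle1 → Circle1} {G : CircleDeg1Lift} (h : IsLift g G)
    (k : ℕ) (x : ℝ) : g^[k] ((x : ℝ) : Circle1) = ((G^[k] x : ℝ) : Circle1) := by
  induction k generalizing x with
  | zero => simp
  | succ k ih =>
    rw [Function.iterate_succ_apply, Function.iterate_succ_apply, h x, ih (G x)]

/-- A finite rotation set for `m_d` has rational rotation number;
equivalently, every point of it is periodic or preperiodic under `m_d`, and it contains
a periodic orbit realizing its rotation number. -/
theorem finite_rotation_set_rational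
    (d : ℕ) (hd : 2 ≤ d) (X : Set Circle1) (ρ : Circle1)
    (hX : IsRotationSetWith d X ρ) (hfin : X.Finite) :
    (∃ r : ℚ, ρ = ((r : ℝ) : Circle1)) ∧
    (∀ t ∈ X, ∃ k n : ℕ, 0 < n ∧ (md d)^[k + n] t = (md d)^[k] t) ∧
    (∃ C : Set Circle1, C ⊆ X ∧ IsPeriodicOrbit d C ∧ IsRotationSetWith d C ρ) := by
  obtain ⟨hne, hcomp, hinv, g, hg, G, hlift, hρ⟩ := hX
  have hmaps : Set.MapsTo (md d) X X := fun t ht => hinv ▸ Set.mem_image_of_mem _ ht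
  have hiter : ∀ t ∈ X, ∀ k : ℕ, (md d)^[k] t ∈ X := fun t ht k => (hmaps.iterate k) ht
  have : Finite ↥X := hfin.to_subtype
  have hpre : ∀ t ∈ X, ∃ i j : ℕ, i < j ∧ (md d)^[i] t = (md d)^[j] t := by
    intro t ht
    obtain ⟨i, j, hij, he⟩ := Finite.exists_ne_map_eq_of_infinite
      (fun k : ℕ => (⟨(md d)^[k] t, hiter t ht k⟩ : X))
    have he' : (md d)^[i] t = (md d)^[j] t := congrArg Subtype.val he
    rcases hij.lt_or_gt with h | h
    · exact ⟨i, j, h, he'⟩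
    · exact ⟨j, i, h, he'.symm⟩
  -- a periodic point `s ∈ X` of period `n > 0`
  obtain ⟨t0, ht0⟩ := hne
  obtain ⟨i, j, hij, he⟩ := hpre t0 ht0
  set s : Circle1 := (md d)^[i] t0 with hs_def
  have hs : s ∈ X := hiter t0 ht0 i
  set n : ℕ := j - i with hn_def
  have npos : 0 < n := Nat.sub_pos_of_lt hij
  have hper : (md d)^[n] s = s := by
    rw [hs_def, ← Function.iterate_add_apply, hn_def, Nat.sub_add_cancel hij.le, ← he]
  -- iterates of `g` agree with iterates of `md d` on `X`
  have hgm : ∀ u ∈ X, ∀ k : ℕ, g^[k] u = (md d)^[k] u := by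
    intro u hu k
    induction k with
    | zero => simp
    | succ k ih =>
      rw [Function.iterate_succ_apply', Function.iterate_succ_apply', ih,
        hg _ (hiter u hu k)]
  -- rationality of the rotation number
  obtain ⟨x, hx⟩ : ∃ x : ℝ, ((x : ℝ) : Circle1) = s := Quotient.exists_rep s
  have hGn : ((G^[n] x : ℝ) : Circle1) = ((x : ℝ) : Circle1) := by
    rw [← hlift.iterate n x, hx, hgm s hs n, hper]
  obtain ⟨m, hm⟩ : ∃ m : ℤ, G^[n] x - x = m • (1 : ℝ) := by
    have := (QuotientAddGroup.eq_iff_sub_mem).1 hGn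
    exact (AddSubgroup.mem_zmultiples_iff.1 this).imp fun m hm => hm.symm
  have hm' : (G ^ n) x = x + m := by
    rw [CircleDeg1Lift.coe_pow]
    rw [zsmul_eq_mul, mul_one] at hm
    linarith [hm]
  have htau : (n : ℝ) * G.translationNumber = m := by
    rw [← G.translationNumber_pow n, CircleDeg1Lift.translationNumber_of_eq_add_int _ hm']
  have hrat : ∃ r : ℚ, ρ = ((r : ℝ) : Circle1) := by
    refine ⟨(m : ℚ) / (n : ℚ), ?_⟩
    have hn0 : (n : ℝ) ≠ 0 := Nat.cast_ne_zero.2 npos.ne'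
    have : G.translationNumber = ((((m : ℚ) / (n : ℚ)) : ℚ) : ℝ) := by
      push_cast
      field_simp
      linarith [htau]
    rw [hρ, this]
  refine ⟨hrat, ?_, ?_⟩
  · -- every point of X is preperiodic
    intro t ht
    obtain ⟨i, j, hij, he⟩ := hpre t ht
    exact ⟨i, j - i, Nat.sub_pos_of_lt hij, by
      rw [Nat.add_sub_cancel' hij.le]; exact he.symm⟩
  · -- the orbit of `s` is a periodic orbit realizing ρ
    refine ⟨Set.range (fun k : Fin n => (md d)^[(k : ℕ)] s), ?_, ⟨s, n, npos, hper, rfl⟩, ?_⟩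
    · rintro _ ⟨k, rfl⟩; exact hiter s hs k
    set C : Set Circle1 := Set.range (fun k : Fin n => (md d)^[(k : ℕ)] s) with hC
    have hsub : C ⊆ X := by rintro _ ⟨k, rfl⟩; exact hiter s hs k
    have hmem : ∀ k : ℕ, (md d)^[k % n] s ∈ C := fun k => ⟨⟨k % n, Nat.mod_lt _ npos⟩, rfl⟩
    have hiterC : ∀ k : ℕ, (md d)^[k] s ∈ C := by
      intro k
      have : (md d)^[k] s = (md d)^[k % n] s := by
        conv_lhs => rw [← Nat.mod_add_div k n, Function.iterate_add_apply]
        congr 1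
        induction (k / n) with
        | zero => simp
        | succ q ih =>
          rw [Nat.mul_succ, Function.iterate_add_apply, hper] at *
          exact ih
      rw [this]; exact hmem k
    refine ⟨⟨s, hiterC 0⟩, (hfin.subset hsub).isCompact, ?_, g, fun t ht => hg t (hsub ht),
      G, hlift, hρ⟩
    apply Set.Subset.antisymm
    · rintro _ ⟨_, ⟨k, rfl⟩, rfl⟩
      have h1 := Function.iterate_succ_apply' (md d) (k : ℕ) s
      show md d ((md d)^[(k : ℕ)] s) ∈ C
      rw [← h1]
      exact hiterC _
    · rintro _ ⟨k, rfl⟩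
      rcases Nat.eq_zero_or_pos (k : ℕ) with h0 | hk
      · refine ⟨(md d)^[n - 1] s, ⟨⟨n - 1, Nat.sub_lt npos one_pos⟩, rfl⟩, ?_⟩
        have h1 := Function.iterate_succ_apply' (md d) (n - 1) s
        show md d ((md d)^[n - 1] s) = (md d)^[(k : ℕ)] s
        have h2 : (n - 1).succ = n := Nat.succ_pred_eq_of_pos npos
        rw [← h1, h2, hper, h0, Function.iterate_zero_apply]
      · refine ⟨(md d)^[(k : ℕ) - 1] s, ⟨⟨(k : ℕ) - 1, lt_of_le_of_lt (Nat.sub_le _ _) k.2⟩, rfl⟩, ?_⟩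
        have h1 := Function.iterate_succ_apply' (md d) ((k : ℕ) - 1) s
        show md d ((md d)^[(k : ℕ) - 1] s) = (md d)^[(k : ℕ)] s
        have h2 : ((k : ℕ) - 1).succ = (k : ℕ) := Nat.succ_pred_eq_of_pos hk
        rw [← h1, h2]
end
end
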